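/- arXiv:1901.03005 — 5 statements merged into one kernel-verified Lean document; each statement's English description precedes it below -/
import Mathlib

section
/- Let F : [0, ∞) → ℝ^I be a solution of the discrete exact-resonance acoustic kinetic system. Then the quantity ∑_{k=1}^{I} k·F_k(t) is constant in t (conservation of energy). -/
open scoped BigOperators Classical

/-- Right-hand side of the discrete exact-resonance acoustic kinetic system on one ray:
for `k₁ ∈ {1,…,I}` and kernel `V_{k₁,k₂,k₃} = μ k₁ k₂ k₃`,
`Q_{k₁}[F] = ∑_{k₂+k₃=k₁} V (F_{k₂}F_{k₃} − F_{k₁}(F_{k₂}+F_{k₃}))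
  − 2 ∑_{k₁+k₂=k₃} V (F_{k₁}F_{k₂} − F_{k₃}(F_{k₁}+F_{k₂}))`. -/
noncomputable def Qd (I : ℕ) (μ : ℝ) (F : ℕ → ℝ) (k1 : ℕ) : ℝ :=
  (∑ k2 ∈ Finset.Icc 1 I, ∑ k3 ∈ Finset.Icc 1 I,
      if k2 + k3 = k1 then μ * k1 * k2 * k3 * (F k2 * F k3 - F k1 * (F k2 + F k3)) else 0)
  - 2 * ∑ k2 ∈ Finset.Icc 1 I, ∑ k3 ∈ Finset.Icc 1 I,
      if k1 + k2 = k3 then μ * k3 * k1 * k2 * (F k1 * F k2 - F k3 * (F k1 + F k2)) else 0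

/-!
In `∑_k w_k Q_k`, every ordered pair `(b, c)` for which `b + c` is again a mode contributes
`w (b + c) C b c` through the gain term and `2 w b C b c` through the loss term. Since the rate
`C` is symmetric, the latter may be replaced by `(w b + w c) C b c`, so everything cancels when
`w` is additive. With `w k = k` this is the statement that the energy has zero derivative.
-/

open Finset

theorem sum_mul_add_eq_two_mul_sum_mul_of_symm {ι R : Type*} [Semiring R] (s : Finset ι)
    (w : ι → R) {X : ι → ι → R} (hX : ∀ b c, X b c = X c b) :
    ∑ b ∈ s, ∑ c ∈ s, (w b + w c) * X b c = 2 * ∑ b ∈ s, ∑ c ∈ s, w b * X b c := by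
  have hswap : ∑ b ∈ s, ∑ c ∈ s, w c * X b c = ∑ b ∈ s, ∑ c ∈ s, w b * X b c := by
    rw [sum_comm]
    exact sum_congr rfl fun b _ => sum_congr rfl fun c _ => by rw [hX]
  simp only [add_mul, sum_add_distrib, hswap, two_mul]

section ThreeWave

variable {M R : Type*} [AddCommMonoid M] [DecidableEq M]

/-- Three-wave collision operator on the modes `s`, `C b c` being the rate of `b + c ↔ b + c`. -/
def threeWaveOp [Ring R] (s : Finset M) (C : M → M → R) (k : M) : R :=
  (∑ b ∈ s, ∑ c ∈ s, if b + c = k then C b c else 0)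
    - 2 * ∑ b ∈ s, ∑ c ∈ s, if k + b = c then C k b else 0

theorem sum_mul_gain_eq_sum_sum [NonUnitalNonAssocSemiring R] (s : Finset M) (w : M → R)
    (C : M → M → R) :
    ∑ k ∈ s, w k * (∑ b ∈ s, ∑ c ∈ s, if b + c = k then C b c else 0)
      = ∑ b ∈ s, ∑ c ∈ s, if b + c ∈ s then w (b + c) * C b c else 0 := by
  simp only [mul_sum, mul_ite, mul_zero]
  rw [sum_comm]
  refine sum_congr rfl fun b _ => ?_
  rw [sum_comm]
  exact sum_congr rfl fun c _ => sum_ite_eq s (b + c) fun k => w k * C b c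

theorem sum_mul_loss_eq_sum_sum [NonUnitalNonAssocSemiring R] (s : Finset M) (w : M → R)
    (C : M → M → R) :
    ∑ k ∈ s, w k * (∑ b ∈ s, ∑ c ∈ s, if k + b = c then C k b else 0)
      = ∑ k ∈ s, ∑ b ∈ s, if k + b ∈ s then w k * C k b else 0 := by
  simp only [mul_sum, mul_ite, mul_zero]
  exact sum_congr rfl fun k _ => sum_congr rfl fun b _ => sum_ite_eq s (k + b) fun _ => w k * C k b

theorem sum_mul_threeWaveOp_eq_zero [CommRing R] (s : Finset M) (w : M →+ R) {C : M → M → R}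
    (hC : ∀ b c, C b c = C c b) :
    ∑ k ∈ s, w k * threeWaveOp s C k = 0 := by
  set X : M → M → R := fun b c => if b + c ∈ s then C b c else 0 with hXdef
  have hX : ∀ b c, X b c = X c b := fun b c => by simp only [hXdef, add_comm b c, hC b c]
  have hgain : ∑ b ∈ s, ∑ c ∈ s, (if b + c ∈ s then w (b + c) * C b c else 0)
      = ∑ b ∈ s, ∑ c ∈ s, (w b + w c) * X b c := by
    simp only [hXdef, map_add, mul_ite, mul_zero]
  have hloss : ∑ k ∈ s, ∑ b ∈ s, (if k + b ∈ s then w k * C k b else 0)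
      = ∑ k ∈ s, ∑ b ∈ s, w k * X k b := by
    simp only [hXdef, mul_ite, mul_zero]
  simp only [threeWaveOp, mul_sub, sum_sub_distrib, mul_left_comm _ (2 : R), ← mul_sum,
    sum_mul_gain_eq_sum_sum, sum_mul_loss_eq_sum_sum, hgain, hloss,
    sum_mul_add_eq_two_mul_sum_mul_of_symm s w hX, sub_self]

end ThreeWave

theorem eq_of_forall_ge_hasDerivAt_zero {E : Type*} [NormedAddCommGroup E] [NormedSpace ℝ E]
    {f : ℝ → E} {a : ℝ} (hf : ∀ x, a ≤ x → HasDerivAt f 0 x) {t : ℝ} (ht : a ≤ t) :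
    f t = f a :=
  constant_of_has_deriv_right_zero
    (fun x hx => (hf x hx.1).continuousAt.continuousWithinAt)
    (fun x hx => (hf x hx.1).hasDerivWithinAt) t ⟨ht, le_rfl⟩

/-- Rate of the acoustic collision `b + c ↔ b + c`, with `V_{b+c,b,c} = μ (b+c) b c`. -/
noncomputable def acousticRate (μ : ℝ) (F : ℕ → ℝ) (b c : ℕ) : ℝ :=
  μ * (b + c : ℕ) * b * c * (F b * F c - F (b + c) * (F b + F c))

theorem acousticRate_symm (μ : ℝ) (F : ℕ → ℝ) (b c : ℕ) :
    acousticRate μ F b c = acousticRate μ F c b := by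
  simp only [acousticRate, add_comm c b]
  ring

theorem Qd_eq_threeWaveOp (I : ℕ) (μ : ℝ) (F : ℕ → ℝ) :
    Qd I μ F = threeWaveOp (Icc 1 I) (acousticRate μ F) := by
  ext k
  simp only [Qd, threeWaveOp, acousticRate]
  congr! 5 with b _ c _ h <;> subst_vars <;> rfl

theorem sum_mul_Qd_eq_zero (I : ℕ) (μ : ℝ) (F : ℕ → ℝ) :
    ∑ k ∈ Icc 1 I, (k : ℝ) * Qd I μ F k = 0 := by
  rw [Qd_eq_threeWaveOp]
  exact sum_mul_threeWaveOp_eq_zero _ (Nat.castAddMonoidHom ℝ) (acousticRate_symm μ F)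

theorem energy_conservation_exact_resonance_general (I : ℕ) (μ : ℝ)
    (F : ℝ → ℕ → ℝ)
    (hsol : ∀ k ∈ Finset.Icc 1 I, ∀ t : ℝ, 0 ≤ t →
      HasDerivAt (fun s => F s k) (Qd I μ (F t) k) t) :
    ∀ t : ℝ, 0 ≤ t →
      ∑ k ∈ Finset.Icc 1 I, (k : ℝ) * F t k = ∑ k ∈ Finset.Icc 1 I, (k : ℝ) * F 0 k := by
  intro t ht
  have henergy : ∀ s, 0 ≤ s → HasDerivAt (fun s => ∑ k ∈ Icc 1 I, (k : ℝ) * F s k) 0 s := by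
    intro s hs
    rw [← sum_mul_Qd_eq_zero I μ (F s)]
    exact HasDerivAt.fun_sum fun k hk => (hsol k hk s hs).const_mul _
  exact eq_of_forall_ge_hasDerivAt_zero henergy ht

/-- Conservation of energy for the discrete exact-resonance acoustic kinetic system:
along any solution, `∑_{k=1}^I k F_k(t)` is constant in `t`. -/
theorem energy_conservation_exact_resonance (I : ℕ) (hI : 0 < I) (μ : ℝ) (hμ : 0 < μ)
    (F : ℝ → ℕ → ℝ)
    (hsol : ∀ k ∈ Finset.Icc 1 I, ∀ t : ℝ, 0 ≤ t →
      HasDerivAt (fun s => F s k) (Qd I μ (F t) k) t) :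
    ∀ t : ℝ, 0 ≤ t →
      ∑ k ∈ Finset.Icc 1 I, (k : ℝ) * F t k = ∑ k ∈ Finset.Icc 1 I, (k : ℝ) * F 0 k :=
  energy_conservation_exact_resonance_general I μ F hsol
end

section
/- For every F ∈ (0, ∞)^I one has ∑_{k=1}^{I} Q_k[F]·(−1/F_k) ≤ 0, and equality holds if and only if 1/F_{k₂+k₃} = 1/F_{k₂} + 1/F_{k₃} for all k₂, k₃ ∈ {1,…,I} with k₂ + k₃ ≤ I. In particular, the function L(F) = −∑_{k=1}^{I} log F_k is nonincreasing along every positive solution of the discrete exact-resonance acoustic kinetic system. -/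
/-!
Summing over ordered pairs `(a, b)`, each resonant triad `a + b = c` contributes its flux
`R = μ c a b (F_a F_b - F_c (F_a + F_b))` to `Q_c` and `-2R` to `Q_a`; by the symmetry `a ↔ b`
the latter is `-R` to each of `Q_a` and `Q_b`. Pairing with `-1/F` and collecting the three
contributions of a triad, the dissipation becomes
`-∑_{a+b≤I} μ (a+b) a b F_a F_b F_{a+b} (1/F_a + 1/F_b - 1/F_{a+b})²`,
a sum of nonpositive terms, which vanishes exactly when every bracket does. Along a positive
solution this dissipation is the time derivative of `-∑ log F_k`.
-/

open scoped BigOperators Classical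

open Finset

section Reindexing

variable {α β : Type*} [Add α] [DecidableEq α] [NonUnitalNonAssocSemiring β]

lemma sum_sum_sum_ite_add_eq_mul (s : Finset α) (X : α → α → α → β) (y : α → β) :
    ∑ c ∈ s, (∑ a ∈ s, ∑ b ∈ s, if a + b = c then X a b c else 0) * y c =
      ∑ a ∈ s, ∑ b ∈ s, if a + b ∈ s then X a b (a + b) * y (a + b) else 0 := by
  simp only [sum_mul, ite_mul, zero_mul]
  rw [sum_comm]
  refine sum_congr rfl fun a _ => ?_
  rw [sum_comm]
  exact sum_congr rfl fun b _ => sum_ite_eq s (a + b) fun c => X a b c * y c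

lemma sum_mul_sum_sum_ite_add_eq (s : Finset α) (X : α → α → α → β) (y : α → β) :
    ∑ a ∈ s, (∑ b ∈ s, ∑ c ∈ s, if a + b = c then X a b c else 0) * y a =
      ∑ a ∈ s, ∑ b ∈ s, if a + b ∈ s then X a b (a + b) * y a else 0 := by
  simp only [sum_mul, ite_mul, zero_mul, sum_ite_eq]

end Reindexing

-- With `u = 1/x`, `v = 1/y`, `w = 1/z`: `x * y - z * (x + y) = x * y * z * (w - u - v)`.
lemma resonant_triad_identity {x y z : ℝ} (hx : x ≠ 0) (hy : y ≠ 0) (hz : z ≠ 0) :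
    (x * y - z * (x + y)) * (-(1 / z) + 1 / x + 1 / y) =
      -(x * y * z * (1 / x + 1 / y - 1 / z) ^ 2) := by
  field_simp
  ring

section Dissipation

variable {I : ℕ} {μ : ℝ} {F : ℕ → ℝ}

def resonantPairs (I : ℕ) : Finset (ℕ × ℕ) :=
  (Icc 1 I ×ˢ Icc 1 I).filter fun p => p.1 + p.2 ≤ I

lemma mem_Icc_of_mem_resonantPairs {p : ℕ × ℕ} (hp : p ∈ resonantPairs I) :
    p.1 ∈ Icc 1 I ∧ p.2 ∈ Icc 1 I ∧ p.1 + p.2 ∈ Icc 1 I := by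
  simp only [resonantPairs, mem_filter, mem_product, mem_Icc] at hp ⊢
  omega

noncomputable def triadDissipation (μ : ℝ) (F : ℕ → ℝ) (a b : ℕ) : ℝ :=
  μ * (a + b : ℕ) * a * b * (F a * F b * F (a + b)) * (1 / F a + 1 / F b - 1 / F (a + b)) ^ 2

lemma triadDissipation_nonneg (hμ : 0 ≤ μ) {a b : ℕ} (ha : 0 < F a) (hb : 0 < F b)
    (hab : 0 < F (a + b)) : 0 ≤ triadDissipation μ F a b := by
  unfold triadDissipation
  positivity

lemma triadDissipation_eq_zero_iff (hμ : 0 < μ) {a b : ℕ} (ha : 0 < a) (hb : 0 < b)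
    (hFa : 0 < F a) (hFb : 0 < F b) (hFab : 0 < F (a + b)) :
    triadDissipation μ F a b = 0 ↔ 1 / F (a + b) = 1 / F a + 1 / F b := by
  have hcoeff : μ * (a + b : ℕ) * a * b * (F a * F b * F (a + b)) ≠ 0 := by positivity
  rw [triadDissipation, mul_eq_zero, or_iff_right hcoeff, pow_eq_zero_iff two_ne_zero,
    sub_eq_zero, eq_comm]

lemma sum_Qd_mul_neg_inv_eq (hF : ∀ k ∈ Icc 1 I, F k ≠ 0) :
    ∑ k ∈ Icc 1 I, Qd I μ F k * (-(1 / F k)) =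
      -∑ p ∈ resonantPairs I, triadDissipation μ F p.1 p.2 := by
  set s := Icc 1 I
  set X : ℕ → ℕ → ℕ → ℝ := fun a b c => μ * c * a * b * (F a * F b - F c * (F a + F b))
  -- In the second sum of `Q_k` the mode `k` is a summand of the triad `k + b = c`, not its sum.
  have hQ : ∀ k, Qd I μ F k * (-(1 / F k)) =
      (∑ a ∈ s, ∑ b ∈ s, if a + b = k then X a b k else 0) * (-(1 / F k)) +
        2 * ((∑ b ∈ s, ∑ c ∈ s, if k + b = c then X k b c else 0) * (1 / F k)) := fun k => by
    rw [Qd]; ring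
  have hswap : ∑ a ∈ s, ∑ b ∈ s, (if a + b ∈ s then X a b (a + b) * (1 / F a) else 0) =
      ∑ a ∈ s, ∑ b ∈ s, if a + b ∈ s then X a b (a + b) * (1 / F b) else 0 := by
    rw [sum_comm]
    refine sum_congr rfl fun a _ => sum_congr rfl fun b _ => ?_
    simp only [X, add_comm b a]
    split_ifs <;> ring
  simp_rw [hQ]
  rw [sum_add_distrib, ← mul_sum, sum_sum_sum_ite_add_eq_mul, sum_mul_sum_sum_ite_add_eq,
    two_mul]
  nth_rw 2 [hswap]
  rw [resonantPairs, sum_filter, sum_product, ← sum_neg_distrib, ← sum_add_distrib,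
    ← sum_add_distrib]
  refine sum_congr rfl fun a ha => ?_
  rw [← sum_neg_distrib, ← sum_add_distrib, ← sum_add_distrib]
  refine sum_congr rfl fun b hb => ?_
  have hab : a + b ∈ s ↔ a + b ≤ I := by
    simp only [s, mem_Icc] at ha ⊢; omega
  simp only [hab]
  split_ifs with h
  · rw [triadDissipation]
    linear_combination (μ * (a + b : ℕ) * a * b) *
      resonant_triad_identity (hF a ha) (hF b hb) (hF _ (hab.2 h))
  · simp

lemma sum_Qd_mul_neg_inv_nonpos (hμ : 0 ≤ μ) (hF : ∀ k ∈ Icc 1 I, 0 < F k) :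
    ∑ k ∈ Icc 1 I, Qd I μ F k * (-(1 / F k)) ≤ 0 := by
  rw [sum_Qd_mul_neg_inv_eq fun k hk => (hF k hk).ne', neg_nonpos]
  refine sum_nonneg fun p hp => ?_
  obtain ⟨h₁, h₂, h₁₂⟩ := mem_Icc_of_mem_resonantPairs hp
  exact triadDissipation_nonneg hμ (hF _ h₁) (hF _ h₂) (hF _ h₁₂)

lemma sum_Qd_mul_neg_inv_eq_zero_iff (hμ : 0 < μ) (hF : ∀ k ∈ Icc 1 I, 0 < F k) :
    ∑ k ∈ Icc 1 I, Qd I μ F k * (-(1 / F k)) = 0 ↔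
      ∀ k2 ∈ Icc 1 I, ∀ k3 ∈ Icc 1 I, k2 + k3 ≤ I → 1 / F (k2 + k3) = 1 / F k2 + 1 / F k3 := by
  rw [sum_Qd_mul_neg_inv_eq fun k hk => (hF k hk).ne', neg_eq_zero,
    sum_eq_zero_iff_of_nonneg fun p hp => ?_]
  · have key : ∀ a ∈ Icc 1 I, ∀ b ∈ Icc 1 I, a + b ≤ I →
        (triadDissipation μ F a b = 0 ↔ 1 / F (a + b) = 1 / F a + 1 / F b) :=
      fun a ha b hb hab => triadDissipation_eq_zero_iff hμ (mem_Icc.1 ha).1 (mem_Icc.1 hb).1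
        (hF a ha) (hF b hb) (hF _ (mem_Icc.2 ⟨le_add_right (mem_Icc.1 ha).1, hab⟩))
    simp only [resonantPairs, mem_filter, mem_product, Prod.forall, and_imp]
    exact ⟨fun h a ha b hb hab => (key a ha b hb hab).1 (h a b ha hb hab),
      fun h a b ha hb hab => (key a ha b hb hab).2 (h a ha b hb hab)⟩
  · obtain ⟨h₁, h₂, h₁₂⟩ := mem_Icc_of_mem_resonantPairs hp
    exact triadDissipation_nonneg hμ.le (hF _ h₁) (hF _ h₂) (hF _ h₁₂)

end Dissipation

lemma hasDerivAt_neg_sum_log {ι : Type*} (s : Finset ι) {G : ℝ → ι → ℝ} {G' : ι → ℝ} {t : ℝ}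
    (hG : ∀ k ∈ s, HasDerivAt (fun u => G u k) (G' k) t) (hG₀ : ∀ k ∈ s, G t k ≠ 0) :
    HasDerivAt (fun u => -∑ k ∈ s, Real.log (G u k)) (∑ k ∈ s, G' k * (-(1 / G t k))) t := by
  refine (HasDerivAt.fun_sum fun k hk => (hG k hk).log (hG₀ k hk)).neg.congr_deriv ?_
  rw [← sum_neg_distrib]
  exact sum_congr rfl fun k _ => by ring

lemma antitoneOn_Ici_of_hasDerivAt_nonpos {f f' : ℝ → ℝ} {a : ℝ}
    (hf : ∀ x, a ≤ x → HasDerivAt f (f' x) x) (hf' : ∀ x, a ≤ x → f' x ≤ 0) :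
    AntitoneOn f (Set.Ici a) := by
  refine antitoneOn_of_hasDerivWithinAt_nonpos (f' := f') (convex_Ici a)
    (fun x hx => (hf x hx).continuousAt.continuousWithinAt) (fun x hx => ?_) fun x hx => ?_
  · rw [interior_Ici] at hx
    exact (hf x (le_of_lt hx)).hasDerivWithinAt
  · rw [interior_Ici] at hx
    exact hf' x (le_of_lt hx)

theorem lyapunov_dissipation_exact_resonance_general (I : ℕ) (μ : ℝ) (hμ : 0 < μ)
    (F : ℕ → ℝ) (hF : ∀ k ∈ Finset.Icc 1 I, 0 < F k) :
    (∑ k ∈ Finset.Icc 1 I, Qd I μ F k * (-(1 / F k)) ≤ 0) ∧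
    ((∑ k ∈ Finset.Icc 1 I, Qd I μ F k * (-(1 / F k)) = 0) ↔
      ∀ k2 ∈ Finset.Icc 1 I, ∀ k3 ∈ Finset.Icc 1 I, k2 + k3 ≤ I →
        1 / F (k2 + k3) = 1 / F k2 + 1 / F k3) ∧
    (∀ G : ℝ → ℕ → ℝ,
      (∀ k ∈ Finset.Icc 1 I, ∀ t : ℝ, 0 ≤ t →
        HasDerivAt (fun s => G s k) (Qd I μ (G t) k) t) →
      (∀ k ∈ Finset.Icc 1 I, ∀ t : ℝ, 0 ≤ t → 0 < G t k) →
      ∀ s t : ℝ, 0 ≤ s → s ≤ t →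
        -∑ k ∈ Finset.Icc 1 I, Real.log (G t k) ≤
          -∑ k ∈ Finset.Icc 1 I, Real.log (G s k)) := by
  refine ⟨sum_Qd_mul_neg_inv_nonpos hμ.le hF, sum_Qd_mul_neg_inv_eq_zero_iff hμ hF, ?_⟩
  intro G hG hGpos s t hs hst
  have hL : AntitoneOn (fun u => -∑ k ∈ Icc 1 I, Real.log (G u k)) (Set.Ici 0) :=
    antitoneOn_Ici_of_hasDerivAt_nonpos
      (fun x hx => hasDerivAt_neg_sum_log _ (fun k hk => hG k hk x hx)
        fun k hk => (hGpos k hk x hx).ne')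
      fun x hx => sum_Qd_mul_neg_inv_nonpos hμ.le fun k hk => hGpos k hk x hx
  exact hL hs (hs.trans hst) hst

/-- Lyapunov dissipation for the discrete exact-resonance acoustic kinetic system:
`∑_k Q_k[F]·(−1/F_k) ≤ 0` on the positive orthant, with equality iff
`1/F_{k₂+k₃} = 1/F_{k₂} + 1/F_{k₃}` whenever `k₂ + k₃ ≤ I`; in particular
`L(F) = −∑_k log F_k` is nonincreasing along every positive solution. -/
theorem lyapunov_dissipation_exact_resonance (I : ℕ) (hI : 0 < I) (μ : ℝ) (hμ : 0 < μ)
    (F : ℕ → ℝ) (hF : ∀ k ∈ Finset.Icc 1 I, 0 < F k) :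
    (∑ k ∈ Finset.Icc 1 I, Qd I μ F k * (-(1 / F k)) ≤ 0) ∧
    ((∑ k ∈ Finset.Icc 1 I, Qd I μ F k * (-(1 / F k)) = 0) ↔
      ∀ k2 ∈ Finset.Icc 1 I, ∀ k3 ∈ Finset.Icc 1 I, k2 + k3 ≤ I →
        1 / F (k2 + k3) = 1 / F k2 + 1 / F k3) ∧
    (∀ G : ℝ → ℕ → ℝ,
      (∀ k ∈ Finset.Icc 1 I, ∀ t : ℝ, 0 ≤ t →
        HasDerivAt (fun s => G s k) (Qd I μ (G t) k) t) →
      (∀ k ∈ Finset.Icc 1 I, ∀ t : ℝ, 0 ≤ t → 0 < G t k) →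
      ∀ s t : ℝ, 0 ≤ s → s ≤ t →
        -∑ k ∈ Finset.Icc 1 I, Real.log (G t k) ≤
          -∑ k ∈ Finset.Icc 1 I, Real.log (G s k)) :=
  lyapunov_dissipation_exact_resonance_general I μ hμ F hF
end

section
/- Let I be a positive integer and let F ∈ (0, ∞)^I. Then 1/F_{k₂+k₃} = 1/F_{k₂} + 1/F_{k₃} holds for all k₂, k₃ ∈ {1,…,I} with k₂ + k₃ ≤ I if and only if there exists ρ > 0 such that F_k = 1/(ρk) for every k ∈ {1,…,I}. -/
open Finset

theorem eq_nsmul_of_add_on_Icc {M : Type*} [AddMonoid M] {I : ℕ} {g : ℕ → M}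
    (hg : ∀ a ∈ Icc 1 I, ∀ b ∈ Icc 1 I, a + b ≤ I → g (a + b) = g a + g b) :
    ∀ k ∈ Icc 1 I, g k = k • g 1 := by
  intro k hk
  rw [mem_Icc] at hk
  induction k, hk.1 using Nat.le_induction with
  | base => rw [one_nsmul]
  | succ n hn ih =>
    have hnI : n ≤ I := by omega
    rw [hg n (mem_Icc.2 ⟨hn, hnI⟩) 1 (mem_Icc.2 ⟨le_rfl, by omega⟩) hk.2, ih ⟨hn, hnI⟩,
      succ_nsmul]

/-- Characterization of equilibria of the discrete exact-resonance acoustic kinetic system: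
for `F ∈ (0,∞)^I`, the relations `1/F_{k₂+k₃} = 1/F_{k₂} + 1/F_{k₃}` (for all `k₂+k₃ ≤ I`)
hold iff `F_k = 1/(ρk)` for some `ρ > 0`. -/
theorem equilibrium_characterization (I : ℕ) (hI : 0 < I)
    (F : ℕ → ℝ) (hF : ∀ k ∈ Finset.Icc 1 I, 0 < F k) :
    (∀ k2 ∈ Finset.Icc 1 I, ∀ k3 ∈ Finset.Icc 1 I, k2 + k3 ≤ I →
        1 / F (k2 + k3) = 1 / F k2 + 1 / F k3) ↔
      ∃ ρ : ℝ, 0 < ρ ∧ ∀ k ∈ Finset.Icc 1 I, F k = 1 / (ρ * k) := by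
  constructor
  · intro hadd
    have hlin := eq_nsmul_of_add_on_Icc (g := fun k ↦ 1 / F k) hadd
    refine ⟨1 / F 1, one_div_pos.2 (hF 1 (mem_Icc.2 ⟨le_rfl, hI⟩)), fun k hk ↦ ?_⟩
    rw [← one_div_one_div (F k), hlin k hk, nsmul_eq_mul, mul_comm]
  · rintro ⟨ρ, -, hρ⟩ k2 hk2 k3 hk3 hsum
    have hk23 : k2 + k3 ∈ Icc 1 I := mem_Icc.2 ⟨by simp at hk2; omega, hsum⟩
    rw [hρ k2 hk2, hρ k3 hk3, hρ _ hk23]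
    simp only [one_div_one_div]
    push_cast
    ring
end

section
/- For every ρ > 0, the vector F* ∈ (0, ∞)^I defined by F*_k = 1/(ρk) for k ∈ {1,…,I} is an equilibrium of the discrete exact-resonance acoustic kinetic system; that is, Q_k[F*] = 0 for every k ∈ {1,…,I}. -/
open scoped BigOperators Classical

/-- For every `ρ > 0`, the vector `F*_k = 1/(ρk)` is an equilibrium of the discrete
exact-resonance acoustic kinetic system: `Q_k[F*] = 0` for all `k ∈ {1,…,I}`. -/
theorem equilibrium_is_steady_state (I : ℕ) (hI : 0 < I) (μ : ℝ) (hμ : 0 < μ)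
    (ρ : ℝ) (hρ : 0 < ρ) :
    ∀ k ∈ Finset.Icc 1 I, Qd I μ (fun j => 1 / (ρ * j)) k = 0 := by
  intro k hk
  have hρ' : ρ ≠ 0 := ne_of_gt hρ
  unfold Qd
  beta_reduce
  have h1 : (∑ k2 ∈ Finset.Icc 1 I, ∑ k3 ∈ Finset.Icc 1 I,
      if k2 + k3 = k then μ * k * k2 * k3 *
        (1 / (ρ * k2) * (1 / (ρ * k3)) - 1 / (ρ * k) * (1 / (ρ * k2) + 1 / (ρ * k3)))
      else 0) = 0 := by
    apply Finset.sum_eq_zero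
    intro k2 hk2
    apply Finset.sum_eq_zero
    intro k3 hk3
    split_ifs with h
    · have h2 : (k2 : ℝ) ≠ 0 := by
        have := (Finset.mem_Icc.mp hk2).1; exact Nat.cast_ne_zero.mpr (by omega)
      have h3 : (k3 : ℝ) ≠ 0 := by
        have := (Finset.mem_Icc.mp hk3).1; exact Nat.cast_ne_zero.mpr (by omega)
      have hkc : (k : ℝ) = k2 + k3 := by exact_mod_cast h.symm
      rw [hkc]
      have hks : (k2 : ℝ) + k3 ≠ 0 := by
        have h2' := (Finset.mem_Icc.mp hk2).1
        have hp2 : (0:ℝ) < (k2:ℝ) := by exact_mod_cast h2'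
        have hp3 : (0:ℝ) ≤ (k3:ℝ) := by positivity
        linarith
      field_simp
      ring
    · rfl
  have h2 : (∑ k2 ∈ Finset.Icc 1 I, ∑ k3 ∈ Finset.Icc 1 I,
      if k + k2 = k3 then μ * k3 * k * k2 *
        (1 / (ρ * k) * (1 / (ρ * k2)) - 1 / (ρ * k3) * (1 / (ρ * k) + 1 / (ρ * k2)))
      else 0) = 0 := by
    apply Finset.sum_eq_zero
    intro k2 hk2
    apply Finset.sum_eq_zero
    intro k3 hk3
    split_ifs with h
    · have h2' : (k2 : ℝ) ≠ 0 := by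
        have := (Finset.mem_Icc.mp hk2).1; exact Nat.cast_ne_zero.mpr (by omega)
      have hk1 : 1 ≤ k := (Finset.mem_Icc.mp hk).1
      have hk' : (k : ℝ) ≠ 0 := Nat.cast_ne_zero.mpr (by omega)
      have hkc : (k3 : ℝ) = k + k2 := by exact_mod_cast h.symm
      rw [hkc]
      have hks : (k : ℝ) + k2 ≠ 0 := by
        have h2'' := (Finset.mem_Icc.mp hk2).1
        have hpos : (0:ℝ) < (k:ℝ) + k2 := by
          have : (1:ℝ) ≤ (k:ℝ) := by exact_mod_cast hk1
          have : (0:ℝ) ≤ (k2:ℝ) := by positivity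
          linarith
        linarith
      field_simp
      ring
    · rfl
  rw [h1, h2]
  ring
end

section
/- Let R > 4 and Λ ≥ 2. Then there is no function Z : L_R* → (0, ∞) such that Z_{p₁} = Z_{p₂} + Z_{p₃} for all p₁, p₂, p₃ ∈ L_R* with p₁ = p₂ + p₃ and | |p₂| + |p₃| − |p₁| | ≤ Λ. -/
open scoped BigOperators Classical

/-- Euclidean norm of a point of the integer lattice `ℤ³`. -/
noncomputable def enorm3 (p : Fin 3 → ℤ) : ℝ := Real.sqrt (∑ i, ((p i : ℝ))^2)

/-- The truncated lattice `L_R* = {p ∈ ℤ³ : 0 < |p| < R}` (as a finite set). -/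
noncomputable def latticeBall (R : ℝ) : Finset (Fin 3 → ℤ) :=
  (Finset.Icc (fun _ => (-⌈R⌉ : ℤ)) (fun _ => (⌈R⌉ : ℤ))).filter
    (fun p => 0 < enorm3 p ∧ enorm3 p < R)

/-- Right-hand side of the discrete exact-resonance acoustic wave kinetic system, with
kernel `V_{p₁,p₂,p₃} = |p₁||p₂||p₃|` and phonon dispersion `ω(p) = |p|`. -/
noncomputable def Qres (R : ℝ) (f : (Fin 3 → ℤ) → ℝ) (p1 : Fin 3 → ℤ) : ℝ :=
  (∑ p2 ∈ latticeBall R, ∑ p3 ∈ latticeBall R,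
      if p1 = p2 + p3 ∧ enorm3 p1 = enorm3 p2 + enorm3 p3 then
        enorm3 p1 * enorm3 p2 * enorm3 p3 *
          (f p2 * f p3 - f p1 * (f p2 + f p3)) else 0)
  - 2 * ∑ p2 ∈ latticeBall R, ∑ p3 ∈ latticeBall R,
      if p3 = p1 + p2 ∧ enorm3 p3 = enorm3 p1 + enorm3 p2 then
        enorm3 p1 * enorm3 p2 * enorm3 p3 *
          (f p1 * f p2 - f p3 * (f p1 + f p2)) else 0

/-- Right-hand side of the discrete near-resonance acoustic wave kinetic system with
resonance broadening `Λ`. -/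
noncomputable def QNR (R Λ : ℝ) (f : (Fin 3 → ℤ) → ℝ) (p1 : Fin 3 → ℤ) : ℝ :=
  (∑ p2 ∈ latticeBall R, ∑ p3 ∈ latticeBall R,
      if p1 = p2 + p3 ∧ |enorm3 p1 - enorm3 p2 - enorm3 p3| ≤ Λ then
        enorm3 p1 * enorm3 p2 * enorm3 p3 *
          (f p2 * f p3 - f p1 * (f p2 + f p3)) else 0)
  - 2 * ∑ p2 ∈ latticeBall R, ∑ p3 ∈ latticeBall R,
      if p3 = p1 + p2 ∧ |enorm3 p3 - enorm3 p1 - enorm3 p2| ≤ Λ then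
        enorm3 p1 * enorm3 p2 * enorm3 p3 *
          (f p1 * f p2 - f p3 * (f p1 + f p2)) else 0

lemma enorm_e1 : enorm3 ![1,0,0] = 1 := by
  simp [enorm3, Fin.sum_univ_three]

lemma enorm_me1 : enorm3 ![-1,0,0] = 1 := by
  simp [enorm3, Fin.sum_univ_three]

lemma enorm_2e1 : enorm3 ![2,0,0] = 2 := by
  rw [enorm3]
  rw [show (∑ i, ((((![2,0,0] : Fin 3 → ℤ)) i : ℝ))^2) = 4 by
    simp [Fin.sum_univ_three]; norm_num]
  rw [show (4:ℝ) = 2^2 by norm_num]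
  exact Real.sqrt_sq (by norm_num)

lemma mem_ball {R : ℝ} (hR : 4 < R) (p : Fin 3 → ℤ) (hcomp : ∀ i, |p i| ≤ 2)
    (h1 : 0 < enorm3 p) (h2 : enorm3 p ≤ 2) : p ∈ latticeBall R := by
  have hc : (4:ℝ) ≤ ⌈R⌉ := le_trans (le_of_lt hR) (Int.le_ceil R)
  have hc' : (4:ℤ) ≤ ⌈R⌉ := by exact_mod_cast hc
  refine Finset.mem_filter.mpr ⟨Finset.mem_Icc.mpr ⟨?_, ?_⟩, h1, lt_of_le_of_lt h2 (by linarith)⟩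
  · intro i
    have := abs_le.mp (hcomp i)
    show -⌈R⌉ ≤ p i
    omega
  · intro i
    have := abs_le.mp (hcomp i)
    show p i ≤ ⌈R⌉
    omega

/-- For broadening `Λ ≥ 2` (and `R > 4`), the equilibrium system
`Z_{p₁} = Z_{p₂} + Z_{p₃}` over all near-resonant triples in `L_R*` has no positive
solution. -/
theorem no_positive_equilibrium_large_broadening (R Λ : ℝ) (hR : 4 < R) (hΛ : 2 ≤ Λ) :
    ¬∃ Z : (Fin 3 → ℤ) → ℝ,
      (∀ p ∈ latticeBall R, 0 < Z p) ∧
      (∀ p1 ∈ latticeBall R, ∀ p2 ∈ latticeBall R, ∀ p3 ∈ latticeBall R,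
        p1 = p2 + p3 → |enorm3 p2 + enorm3 p3 - enorm3 p1| ≤ Λ →
          Z p1 = Z p2 + Z p3) := by
  rintro ⟨Z, hpos, hsys⟩
  set e : Fin 3 → ℤ := ![1,0,0] with he_def
  set me : Fin 3 → ℤ := ![-1,0,0] with hme_def
  set te : Fin 3 → ℤ := ![2,0,0] with hte_def
  have he : e ∈ latticeBall R := by
    refine mem_ball hR _ (fun i => by fin_cases i <;> simp [he_def]) ?_ ?_ <;>
      rw [enorm_e1] <;> norm_num
  have hme : me ∈ latticeBall R := by
    refine mem_ball hR _ (fun i => by fin_cases i <;> simp [hme_def]) ?_ ?_ <;>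
      rw [enorm_me1] <;> norm_num
  have hte : te ∈ latticeBall R := by
    refine mem_ball hR _ (fun i => by fin_cases i <;> simp [hte_def]) ?_ ?_ <;>
      rw [enorm_2e1] <;> norm_num
  have hsum1 : te = e + e := by
    funext i; fin_cases i <;> simp [he_def, hte_def]
  have hsum2 : e = te + me := by
    funext i; fin_cases i <;> simp [he_def, hme_def, hte_def]
  have h2 : Z te = Z e + Z e := by
    apply hsys te hte e he e he hsum1
    rw [enorm_e1, enorm_2e1]; norm_num; linarith
  have h1 : Z e = Z te + Z me := by
    apply hsys e he te hte me hme hsum2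
    rw [enorm_e1, enorm_me1, enorm_2e1]
    rw [show (2:ℝ) + 1 - 1 = 2 by norm_num, abs_two]; exact hΛ
  have := hpos e he
  have := hpos me hme
  linarith
end
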